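/- arXiv:1709.08593 — 3 statements merged into one kernel-verified Lean document; each statement's English description precedes it below -/
import Mathlib

section
/- (Proposition 4) Let (n, m) ∈ (ℝ⁺)² with m ≍ M and fix an index j with d_j > 0. If U = |n/m² − u_j| is small enough, then |∂³h/∂n∂m² (n, m)| ≍ 1/M³. -/
open scoped Classical
open Filter Asymptotics MeasureTheory

noncomputable section

open Set in
open scoped Pointwise in
private lemma prop4_g_hom (E : Set (EuclideanSpace ℝ (Fin 3)))
    (g : EuclideanSpace ℝ (Fin 3) → ℝ)
    (hg : ∀ v, g v = sSup ((fun x : EuclideanSpace ℝ (Fin 3) => (inner ℝ x v : ℝ)) '' E))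
    (c : ℝ) (hc : 0 ≤ c) (v : EuclideanSpace ℝ (Fin 3)) : g (c • v) = c * g v := by
  rw [hg, hg]
  have h1 : (fun x : EuclideanSpace ℝ (Fin 3) => (inner ℝ x (c • v) : ℝ)) '' E
      = c • ((fun x : EuclideanSpace ℝ (Fin 3) => (inner ℝ x v : ℝ)) '' E) := by
    rw [← Set.image_smul, Set.image_image]
    apply Set.image_congr
    intro x _
    rw [real_inner_smul_right]
    rfl
  rw [h1, Real.sSup_smul_of_nonneg hc]
  rfl

open Set in
private lemma prop4_Gside (G F : ℝ → ℝ) (h : ℝ → ℝ → ℝ)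
    (hG : ContDiffOn ℝ (((⊤:ℕ∞)) : WithTop ℕ∞) G (Set.Ioi 0))
    (Hhom : ∀ n m : ℝ, 0 < n → 0 < m → h n m = m * G (n / m ^ 2))
    (hhm : ∀ n m : ℝ, 0 < n → 0 < m → deriv (h n) m = F (n / m ^ 2)) :
    (∀ u : ℝ, 0 < u →
      deriv F u + u * deriv (deriv F) u
        = -(deriv G u + 5*u*deriv (deriv G) u + 2*u^2*deriv (deriv (deriv G)) u)) ∧
    (∀ n m : ℝ, 0 < n → 0 < m →
      deriv (deriv (fun y : ℝ => deriv (fun x : ℝ => h x y) n)) m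
        = (2/m^3) * (deriv G (n/m^2) + 5*(n/m^2)*deriv (deriv G) (n/m^2)
            + 2*(n/m^2)^2*deriv (deriv (deriv G)) (n/m^2))) := by
  have htop : (((⊤:ℕ∞)) : WithTop ℕ∞) + 1 ≤ (((⊤:ℕ∞)) : WithTop ℕ∞) := by
    norm_num
  have hone : (((⊤:ℕ∞)) : WithTop ℕ∞) ≠ 0 :=
    (lt_of_lt_of_le (zero_lt_one : (0 : WithTop ℕ∞) < 1) (by exact_mod_cast le_top)).ne'
  set G1 := deriv G with hG1def
  set G2 := deriv G1 with hG2def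
  set G3 := deriv G2 with hG3def
  have hGc1 : ContDiffOn ℝ (((⊤:ℕ∞)) : WithTop ℕ∞) G1 (Set.Ioi 0) :=
    hG.deriv_of_isOpen isOpen_Ioi htop
  have hGc2 : ContDiffOn ℝ (((⊤:ℕ∞)) : WithTop ℕ∞) G2 (Set.Ioi 0) :=
    hGc1.deriv_of_isOpen isOpen_Ioi htop
  have hGd : ∀ u : ℝ, 0 < u → HasDerivAt G (G1 u) u := fun u hu =>
    (((hG.differentiableOn hone).differentiableAt (Ioi_mem_nhds hu))).hasDerivAt
  have hGd1 : ∀ u : ℝ, 0 < u → HasDerivAt G1 (G2 u) u := fun u hu =>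
    (((hGc1.differentiableOn hone).differentiableAt (Ioi_mem_nhds hu))).hasDerivAt
  have hGd2 : ∀ u : ℝ, 0 < u → HasDerivAt G2 (G3 u) u := fun u hu =>
    (((hGc2.differentiableOn hone).differentiableAt (Ioi_mem_nhds hu))).hasDerivAt
  constructor
  · -- F-side
    intro u hu
    have hFid : ∀ v : ℝ, 0 < v → F v = G v - 2*v*G1 v := by
      intro v hv
      have h1 : deriv (h v) 1 = F (v / 1 ^ 2) := hhm v 1 hv one_pos
      have hev : (h v) =ᶠ[nhds 1] fun y : ℝ => y * G (v / y ^ 2) := by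
        filter_upwards [Ioi_mem_nhds (zero_lt_one)] with y hy
        exact Hhom v y hv hy
      have hinner : HasDerivAt (fun y : ℝ => v / y ^ 2)
          ((0 * 1 ^ 2 - v * (↑2 * 1 ^ 1)) / (1 ^ 2) ^ 2) 1 :=
        (hasDerivAt_const 1 v).div (hasDerivAt_pow 2 1) (by norm_num)
      have hcomp : HasDerivAt (fun y : ℝ => G (v / y ^ 2))
          (G1 (v / 1 ^ 2) * ((0 * 1 ^ 2 - v * (↑2 * 1 ^ 1)) / (1 ^ 2) ^ 2)) 1 :=
        (hGd (v / 1 ^ 2) (by simpa using hv)).comp 1 hinner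
      have hmul : HasDerivAt (fun y : ℝ => y * G (v / y ^ 2))
          (1 * G (v / 1 ^ 2) + 1 * (G1 (v / 1 ^ 2) * ((0 * 1 ^ 2 - v * (↑2 * 1 ^ 1)) / (1 ^ 2) ^ 2))) 1 :=
        (hasDerivAt_id 1).mul hcomp
      have h5 : deriv (h v) 1 = G v - 2*v*G1 v := by
        rw [hev.deriv_eq, hmul.deriv]
        norm_num; ring
      rw [← h5, h1]; norm_num
    have hF'at : ∀ v : ℝ, 0 < v → HasDerivAt F (-(G1 v) - 2*v*G2 v) v := by
      intro v hv
      have hev : F =ᶠ[nhds v] fun w : ℝ => G w - 2*w*G1 w := by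
        filter_upwards [Ioi_mem_nhds hv] with y hy
        exact hFid y hy
      have h2 : HasDerivAt (fun w : ℝ => 2*w*G1 w) (2 * 1 * G1 v + 2 * v * G2 v) v :=
        ((hasDerivAt_id v).const_mul (2:ℝ)).mul (hGd1 v hv)
      have h3 : HasDerivAt (fun w : ℝ => G w - 2*w*G1 w)
          (G1 v - (2 * 1 * G1 v + 2 * v * G2 v)) v := (hGd v hv).sub h2
      have h4 := h3.congr_of_eventuallyEq hev
      exact (show G1 v - (2 * 1 * G1 v + 2 * v * G2 v) = -(G1 v) - 2*v*G2 v by ring) ▸ h4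
    have hF''at : HasDerivAt (deriv F) (-3*G2 u - 2*u*G3 u) u := by
      have hev : deriv F =ᶠ[nhds u] fun w : ℝ => -(G1 w) - 2*w*G2 w := by
        filter_upwards [Ioi_mem_nhds hu] with y hy
        exact (hF'at y hy).deriv
      have h2 : HasDerivAt (fun w : ℝ => 2*w*G2 w) (2 * 1 * G2 u + 2 * u * G3 u) u :=
        ((hasDerivAt_id u).const_mul (2:ℝ)).mul (hGd2 u hu)
      have h3 : HasDerivAt (fun w : ℝ => -(G1 w) - 2*w*G2 w)
          (-(G2 u) - (2 * 1 * G2 u + 2 * u * G3 u)) u := ((hGd1 u hu).neg).sub h2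
      have h4 := h3.congr_of_eventuallyEq hev
      exact (show -(G2 u) - (2 * 1 * G2 u + 2 * u * G3 u) = -3*G2 u - 2*u*G3 u by ring) ▸ h4
    rw [(hF'at u hu).deriv, hF''at.deriv]
    ring
  · -- h-side
    intro n m hn hm
    set Q : ℝ → ℝ := fun y => G1 (n/y^2) / y with hQdef
    set R : ℝ → ℝ := fun y => -2*n*G2 (n/y^2)/y^4 - G1 (n/y^2)/y^2 with hRdef
    have hA : ∀ y : ℝ, 0 < y → deriv (fun x : ℝ => h x y) n = Q y := by
      intro y hy
      have hu : 0 < n / y ^ 2 := div_pos hn (by positivity)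
      have hev : (fun x : ℝ => h x y) =ᶠ[nhds n] fun x : ℝ => y * G (x / y ^ 2) := by
        filter_upwards [Ioi_mem_nhds hn] with x hx
        exact Hhom x y hx hy
      have hinner : HasDerivAt (fun x : ℝ => x / y ^ 2) (1 / y ^ 2) n :=
        (hasDerivAt_id n).div_const (y ^ 2)
      have hcomp : HasDerivAt (fun x : ℝ => G (x / y ^ 2)) (G1 (n/y^2) * (1 / y ^ 2)) n :=
        (hGd _ hu).comp n hinner
      have hmul := hcomp.const_mul y
      rw [hev.deriv_eq, hmul.deriv, hQdef]
      field_simp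
    have hinner2 : ∀ y : ℝ, 0 < y → HasDerivAt (fun t : ℝ => n / t ^ 2)
        ((0 * y ^ 2 - n * (↑2 * y ^ 1)) / (y ^ 2) ^ 2) y := by
      intro y hy
      exact (hasDerivAt_const y n).div (hasDerivAt_pow 2 y) (by positivity)
    have hQ' : ∀ y : ℝ, 0 < y → HasDerivAt Q (R y) y := by
      intro y hy
      have hu : 0 < n / y ^ 2 := div_pos hn (by positivity)
      have hcomp : HasDerivAt (fun t : ℝ => G1 (n / t ^ 2))
          (G2 (n/y^2) * ((0 * y ^ 2 - n * (↑2 * y ^ 1)) / (y ^ 2) ^ 2)) y :=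
        HasDerivAt.comp (h₂ := G1) y (hGd1 _ hu) (hinner2 y hy)
      have h4 : HasDerivAt Q ((G2 (n/y^2) * ((0 * y ^ 2 - n * (↑2 * y ^ 1)) / (y ^ 2) ^ 2) * y
          - G1 (n/y^2) * 1) / y ^ 2) y := hcomp.div (hasDerivAt_id y) (ne_of_gt hy)
      have hval : (G2 (n/y^2) * ((0 * y ^ 2 - n * (↑2 * y ^ 1)) / (y ^ 2) ^ 2) * y
          - G1 (n/y^2) * 1) / y ^ 2 = R y := by
        rw [hRdef]
        field_simp
        ring
      exact hval ▸ h4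
    have hR' : ∀ y : ℝ, 0 < y → HasDerivAt R
        (4*n^2*G3 (n/y^2)/y^7 + 10*n*G2 (n/y^2)/y^5 + 2*G1 (n/y^2)/y^3) y := by
      intro y hy
      have hu : 0 < n / y ^ 2 := div_pos hn (by positivity)
      have hc1 : HasDerivAt (fun t : ℝ => -2*n*G2 (n / t ^ 2))
          (-2*n*(G3 (n/y^2) * ((0 * y ^ 2 - n * (↑2 * y ^ 1)) / (y ^ 2) ^ 2))) y := by
        have h0 := ((hGd2 _ hu).comp y (hinner2 y hy)).const_mul (-2*n)
        exact h0
      have ht1 : HasDerivAt (fun t : ℝ => -2*n*G2 (n / t ^ 2) / t ^ 4)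
          ((-2*n*(G3 (n/y^2) * ((0 * y ^ 2 - n * (↑2 * y ^ 1)) / (y ^ 2) ^ 2)) * y ^ 4
            - -2*n*G2 (n/y^2) * (↑4 * y ^ 3)) / (y ^ 4) ^ 2) y :=
        hc1.div (hasDerivAt_pow 4 y) (by positivity)
      have hc2 : HasDerivAt (fun t : ℝ => G1 (n / t ^ 2))
          (G2 (n/y^2) * ((0 * y ^ 2 - n * (↑2 * y ^ 1)) / (y ^ 2) ^ 2)) y :=
        HasDerivAt.comp (h₂ := G1) y (hGd1 _ hu) (hinner2 y hy)
      have ht2 : HasDerivAt (fun t : ℝ => G1 (n / t ^ 2) / t ^ 2)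
          ((G2 (n/y^2) * ((0 * y ^ 2 - n * (↑2 * y ^ 1)) / (y ^ 2) ^ 2) * y ^ 2
            - G1 (n/y^2) * (↑2 * y ^ 1)) / (y ^ 2) ^ 2) y :=
        hc2.div (hasDerivAt_pow 2 y) (by positivity)
      have h6 := ht1.sub ht2
      have hval : (-2*n*(G3 (n/y^2) * ((0 * y ^ 2 - n * (↑2 * y ^ 1)) / (y ^ 2) ^ 2)) * y ^ 4
            - -2*n*G2 (n/y^2) * (↑4 * y ^ 3)) / (y ^ 4) ^ 2
          - (G2 (n/y^2) * ((0 * y ^ 2 - n * (↑2 * y ^ 1)) / (y ^ 2) ^ 2) * y ^ 2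
            - G1 (n/y^2) * (↑2 * y ^ 1)) / (y ^ 2) ^ 2
          = 4*n^2*G3 (n/y^2)/y^7 + 10*n*G2 (n/y^2)/y^5 + 2*G1 (n/y^2)/y^3 := by
        field_simp
        ring
      exact hval ▸ h6
    set P : ℝ → ℝ := fun y => deriv (fun x : ℝ => h x y) n with hPdef
    have hPev : deriv P =ᶠ[nhds m] R := by
      filter_upwards [Ioi_mem_nhds hm] with y hy
      have hPQ : P =ᶠ[nhds y] Q := by
        filter_upwards [Ioi_mem_nhds hy] with z hz
        exact hA z hz
      rw [hPQ.deriv_eq, (hQ' y hy).deriv]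
    rw [hPev.deriv_eq, (hR' m hm).deriv]
    field_simp
    ring

private def prop4_K (G : ℝ → ℝ) : ℝ → ℝ :=
  fun v => deriv G v + 5*v*deriv (deriv G) v + 2*v^2*deriv (deriv (deriv G)) v

set_option maxHeartbeats 2000000 in
/-- **Proposition 4.** `∂³h/∂n∂m² (n,m) ≍ 1/M³` for `n/m²` close enough to `u_j`,
where `d_j > 0`. -/
theorem proposition_four
    -- the body of revolution `E` and its generatrices
    (rinf : ℝ) (hrinf : 0 < rinf)
    (f₁ f₂ : ℝ → ℝ)
    (E : Set (EuclideanSpace ℝ (Fin 3)))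
    (hE : E = {p : EuclideanSpace ℝ (Fin 3) |
      Real.sqrt ((p 0) ^ 2 + (p 1) ^ 2) ≤ rinf ∧
      f₂ (Real.sqrt ((p 0) ^ 2 + (p 1) ^ 2)) ≤ p 2 ∧
      p 2 ≤ f₁ (Real.sqrt ((p 0) ^ 2 + (p 1) ^ 2))})
    (hEcomp : IsCompact E) (hEconv : Convex ℝ E) (hEint : (interior E).Nonempty)
    -- smoothness of the boundary and positivity of its Gaussian curvature,
    -- expressed through the generatrices
    (hf₁smooth : ContDiffOn ℝ (⊤ : ℕ∞) f₁ (Set.Ico 0 rinf))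
    (hf₂smooth : ContDiffOn ℝ (⊤ : ℕ∞) f₂ (Set.Ico 0 rinf))
    (hf₁curv : ∀ r ∈ Set.Ico (0:ℝ) rinf, deriv (deriv f₁) r < 0)
    (hf₂curv : ∀ r ∈ Set.Ico (0:ℝ) rinf, 0 < deriv (deriv f₂) r)
    (hf₁pole : deriv f₁ 0 = 0) (hf₂pole : deriv f₂ 0 = 0)
    (hf₁slope : Tendsto (deriv f₁) (nhdsWithin rinf (Set.Iio rinf)) atBot)
    (hf₂slope : Tendsto (deriv f₂) (nhdsWithin rinf (Set.Iio rinf)) atTop)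
    -- the zeros `0 = r₀ < r₁ < ⋯ < r_{j₀-1}` of `f₁'''` in `[0, rinf)`, the point
    -- `r_{j₀} ∈ (r_{j₀-1}, rinf)`, the values `u_j = (f₁'(r_j))²` and the orders `d_j`
    (j₀ : ℕ) (hj₀pos : 0 < j₀)
    (rz : ℕ → ℝ) (hrz0 : rz 0 = 0)
    (hrzmono : StrictMonoOn rz (Set.Iic j₀))
    (hrzzeros : {r : ℝ | r ∈ Set.Ico 0 rinf ∧ iteratedDeriv 3 f₁ r = 0} = rz '' (Set.Iio j₀))
    (hrzlast : rz (j₀ - 1) < rz j₀ ∧ rz j₀ < rinf)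
    (u : ℕ → ℝ) (hu : ∀ j, u j = (deriv f₁ (rz j)) ^ 2)
    (d : ℕ → ℕ)
    (hd : ∀ j, 1 ≤ j → j ≤ j₀ → ∃ δ > (0:ℝ), ∃ c > (0:ℝ), ∃ C > (0:ℝ),
      ∀ r ∈ Set.Ico (0:ℝ) rinf, r ≠ rz j → |r - rz j| < δ →
        c * |r - rz j| ^ (d j) ≤ |iteratedDeriv 3 f₁ r| ∧
        |iteratedDeriv 3 f₁ r| ≤ C * |r - rz j| ^ (d j))
    (hd0 : ∃ δ > (0:ℝ), ∃ c > (0:ℝ), ∃ C > (0:ℝ), ∀ r : ℝ, 0 < r → r < δ →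
      c * r ^ (2 * d 0 + 1) ≤ |iteratedDeriv 3 f₁ r| ∧
      |iteratedDeriv 3 f₁ r| ≤ C * r ^ (2 * d 0 + 1))
    -- the support function `g` of `E` and `h(n,m) = g(√n, 0, m)`
    (g : EuclideanSpace ℝ (Fin 3) → ℝ)
    (hg : ∀ v, g v = sSup ((fun x : EuclideanSpace ℝ (Fin 3) => (inner ℝ x v : ℝ)) '' E))
    (h : ℝ → ℝ → ℝ)
    (hh : ∀ n m : ℝ, h n m = g (WithLp.toLp 2 ![Real.sqrt n, 0, m] : EuclideanSpace ℝ (Fin 3)))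
    -- `φ`, the inverse of `-f₁'`, and `F(u) = f₁(φ(√u))`
    (φ : ℝ → ℝ)
    (hφ : ∀ r ∈ Set.Ico (0:ℝ) rinf, φ (-(deriv f₁ r)) = r)
    (hφ2 : ∀ s : ℝ, 0 ≤ s → φ s ∈ Set.Ico (0:ℝ) rinf ∧ -(deriv f₁ (φ s)) = s)
    (F : ℝ → ℝ) (hF : ∀ s : ℝ, F s = f₁ (φ (Real.sqrt s)))
    -- `∂h/∂m (n,m) = F(n/m²)`, and smoothness of `h`
    (hhm : ∀ n m : ℝ, 0 < n → 0 < m → deriv (h n) m = F (n / m ^ 2))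
    (hhsmooth : ContDiffOn ℝ (⊤ : ℕ∞) (fun p : ℝ × ℝ => h p.1 p.2) (Set.Ioi 0 ×ˢ Set.Ioi 0))
    (j : ℕ) (hj : j ≤ j₀) (hdj : 0 < d j)
    (c₁ c₂ : ℝ) (hc₁ : 0 < c₁) (hc₁₂ : c₁ ≤ c₂) :
    ∃ U₀ > (0:ℝ), ∃ C₁ > (0:ℝ), ∃ C₂ > (0:ℝ), ∀ n m M : ℝ,
      0 < n → 0 < m → 0 < M → c₁ * M ≤ m → m ≤ c₂ * M →
      |n / m ^ 2 - u j| ≤ U₀ →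
      C₁ / M ^ 3 ≤ |deriv (deriv (fun y : ℝ => deriv (fun x : ℝ => h x y) n)) m| ∧
      |deriv (deriv (fun y : ℝ => deriv (fun x : ℝ => h x y) n)) m| ≤ C₂ / M ^ 3 := by
  have htop : (((⊤:ℕ∞)) : WithTop ℕ∞) + 1 ≤ (((⊤:ℕ∞)) : WithTop ℕ∞) := by
    norm_num
  have hone : (((⊤:ℕ∞)) : WithTop ℕ∞) ≠ 0 :=
    (lt_of_lt_of_le (zero_lt_one : (0 : WithTop ℕ∞) < 1) (by exact_mod_cast le_top)).ne'
  have hiter3 : iteratedDeriv 3 f₁ = deriv (deriv (deriv f₁)) := by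
    rw [show (3:ℕ) = 2+1 from rfl, iteratedDeriv_succ, show (2:ℕ) = 1+1 from rfl,
      iteratedDeriv_succ, iteratedDeriv_one]
  -- smoothness of f₁ and its derivatives on the open interval
  have hsmO : ContDiffOn ℝ (((⊤:ℕ∞)) : WithTop ℕ∞) f₁ (Set.Ioo 0 rinf) :=
    (hf₁smooth.of_le (by simp)).mono Set.Ioo_subset_Ico_self
  have hψO : ContDiffOn ℝ (((⊤:ℕ∞)) : WithTop ℕ∞) (deriv f₁) (Set.Ioo 0 rinf) :=
    hsmO.deriv_of_isOpen isOpen_Ioo htop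
  have hf2O : ContDiffOn ℝ (((⊤:ℕ∞)) : WithTop ℕ∞) (deriv (deriv f₁)) (Set.Ioo 0 rinf) :=
    hψO.deriv_of_isOpen isOpen_Ioo htop
  have hf3O : ContDiffOn ℝ (((⊤:ℕ∞)) : WithTop ℕ∞) (deriv (deriv (deriv f₁))) (Set.Ioo 0 rinf) :=
    hf2O.deriv_of_isOpen isOpen_Ioo htop
  have hf₁d : ∀ r ∈ Set.Ioo (0:ℝ) rinf, HasDerivAt f₁ (deriv f₁ r) r := fun r hr =>
    ((hsmO.differentiableOn hone).differentiableAt (isOpen_Ioo.mem_nhds hr)).hasDerivAt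
  have hψd : ∀ r ∈ Set.Ioo (0:ℝ) rinf, HasDerivAt (deriv f₁) (deriv (deriv f₁) r) r := fun r hr =>
    ((hψO.differentiableOn hone).differentiableAt (isOpen_Ioo.mem_nhds hr)).hasDerivAt
  have hf2d : ∀ r ∈ Set.Ioo (0:ℝ) rinf,
      HasDerivAt (deriv (deriv f₁)) (deriv (deriv (deriv f₁)) r) r := fun r hr =>
    ((hf2O.differentiableOn hone).differentiableAt (isOpen_Ioo.mem_nhds hr)).hasDerivAt
  have h0mem : (0:ℝ) ∈ Set.Ico (0:ℝ) rinf := ⟨le_rfl, hrinf⟩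
  have hψdiffIco : ∀ r ∈ Set.Ico (0:ℝ) rinf, DifferentiableAt ℝ (deriv f₁) r := fun r hr =>
    differentiableAt_of_deriv_ne_zero (ne_of_lt (hf₁curv r hr))
  have hψcont : ContinuousOn (deriv f₁) (Set.Ico 0 rinf) := fun r hr =>
    ((hψdiffIco r hr).continuousAt).continuousWithinAt
  have hψanti : StrictAntiOn (deriv f₁) (Set.Ico 0 rinf) := by
    apply strictAntiOn_of_deriv_neg (convex_Ico _ _) hψcont
    intro x hx
    rw [interior_Ico] at hx
    exact hf₁curv x (Set.Ioo_subset_Ico_self hx)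
  have hψneg : ∀ r ∈ Set.Ioo (0:ℝ) rinf, deriv f₁ r < 0 := by
    intro r hr
    have h1 := hψanti h0mem ⟨hr.1.le, hr.2⟩ hr.1
    rwa [hf₁pole] at h1
  -- φ basic facts
  have hφval : ∀ s : ℝ, 0 ≤ s → deriv f₁ (φ s) = -s := by
    intro s hs; have := (hφ2 s hs).2; linarith
  have hφpos : ∀ s : ℝ, 0 < s → 0 < φ s := by
    intro s hs
    rcases eq_or_lt_of_le ((hφ2 s hs.le).1.1) with h1 | h1
    · exfalso
      have h2 := hφval s hs.le
      rw [← h1, hf₁pole] at h2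
      linarith
    · exact h1
  have hφmono : ∀ s t : ℝ, 0 ≤ s → s < t → φ s < φ t := by
    intro s t hs hst
    by_contra hc
    push_neg at hc
    have hmems := (hφ2 s hs).1
    have hmemt := (hφ2 t (hs.trans hst.le)).1
    rcases eq_or_lt_of_le hc with h1 | h1
    · have h2 := hφval t (hs.trans hst.le)
      rw [h1, hφval s hs] at h2
      linarith
    · have h2 := hψanti hmemt hmems h1
      rw [hφval s hs, hφval t (hs.trans hst.le)] at h2
      linarith
  -- continuity of φ at positive points
  have hφcont : ∀ s : ℝ, 0 < s → ContinuousAt φ s := by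
    intro s₀ hs₀
    have hr₀mem := (hφ2 s₀ hs₀.le).1
    have hr₀pos : 0 < φ s₀ := hφpos s₀ hs₀
    rw [Metric.continuousAt_iff]
    intro ε hε
    have hε'pos : 0 < min (ε/2) (min (φ s₀/2) ((rinf - φ s₀)/2)) := by
      apply lt_min (by linarith)
      apply lt_min (by linarith)
      have := hr₀mem.2; linarith
    set ε' := min (ε/2) (min (φ s₀/2) ((rinf - φ s₀)/2)) with hε'def
    have hε'le1 : ε' ≤ ε/2 := min_le_left _ _
    have hε'le2 : ε' ≤ φ s₀/2 := le_trans (min_le_right _ _) (min_le_left _ _)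
    have hε'le3 : ε' ≤ (rinf - φ s₀)/2 := le_trans (min_le_right _ _) (min_le_right _ _)
    have h1 : 0 < φ s₀ - ε' := by linarith
    have h2 : φ s₀ + ε' < rinf := by linarith
    have hrm : φ s₀ - ε' ∈ Set.Ico (0:ℝ) rinf := ⟨by linarith, by linarith [hr₀mem.2]⟩
    have hrp : φ s₀ + ε' ∈ Set.Ico (0:ℝ) rinf := ⟨by linarith, h2⟩
    have hsm : -(deriv f₁ (φ s₀ - ε')) < s₀ := by
      have h3 := hψanti hrm hr₀mem (by linarith)
      rw [hφval s₀ hs₀.le] at h3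
      linarith
    have hsp : s₀ < -(deriv f₁ (φ s₀ + ε')) := by
      have h3 := hψanti hr₀mem hrp (by linarith)
      rw [hφval s₀ hs₀.le] at h3
      linarith
    have hsmpos : 0 < -(deriv f₁ (φ s₀ - ε')) := by
      have := hψneg (φ s₀ - ε') ⟨h1, hrm.2⟩; linarith
    refine ⟨min (s₀ - -(deriv f₁ (φ s₀ - ε'))) (-(deriv f₁ (φ s₀ + ε')) - s₀),
      lt_min (by linarith) (by linarith), ?_⟩
    intro s hs
    rw [Real.dist_eq] at hs
    have habs := abs_lt.1 hs
    have hs1 : -(deriv f₁ (φ s₀ - ε')) < s := by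
      have := min_le_left (s₀ - -(deriv f₁ (φ s₀ - ε'))) (-(deriv f₁ (φ s₀ + ε')) - s₀)
      linarith [habs.1]
    have hs2 : s < -(deriv f₁ (φ s₀ + ε')) := by
      have := min_le_right (s₀ - -(deriv f₁ (φ s₀ - ε'))) (-(deriv f₁ (φ s₀ + ε')) - s₀)
      linarith [habs.2]
    have e1 : φ (-(deriv f₁ (φ s₀ - ε'))) = φ s₀ - ε' := hφ _ hrm
    have e2 : φ (-(deriv f₁ (φ s₀ + ε'))) = φ s₀ + ε' := hφ _ hrp
    have hφs1 : φ s₀ - ε' < φ s := by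
      have := hφmono _ s hsmpos.le hs1
      rwa [e1] at this
    have hφs2 : φ s < φ s₀ + ε' := by
      have := hφmono s _ (by linarith) hs2
      rwa [e2] at this
    rw [Real.dist_eq, abs_lt]
    constructor <;> linarith
  -- derivative of φ
  have hφder : ∀ s : ℝ, 0 < s → HasDerivAt φ (-(deriv (deriv f₁) (φ s)))⁻¹ s := by
    intro s hs
    have hmem : φ s ∈ Set.Ioo (0:ℝ) rinf := ⟨hφpos s hs, (hφ2 s hs.le).1.2⟩
    have hf : HasDerivAt (fun r => -(deriv f₁ r)) (-(deriv (deriv f₁) (φ s))) (φ s) :=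
      (hψd _ hmem).neg
    apply HasDerivAt.of_local_left_inverse (hφcont s hs) hf
    · have := hf₁curv _ (Set.Ioo_subset_Ico_self hmem); linarith
    · filter_upwards [Ioi_mem_nhds hs] with y hy
      exact (hφ2 y (le_of_lt hy)).2
  -- derivative of v ↦ φ (√v)
  have hrrd : ∀ v : ℝ, 0 < v → HasDerivAt (fun w : ℝ => φ (Real.sqrt w))
      ((-(deriv (deriv f₁) (φ (Real.sqrt v))))⁻¹ * (1/(2*Real.sqrt v))) v := by
    intro v hv
    exact (hφder _ (Real.sqrt_pos.2 hv)).comp v (Real.hasDerivAt_sqrt (ne_of_gt hv))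
  have hrrmem : ∀ v : ℝ, 0 < v → φ (Real.sqrt v) ∈ Set.Ioo (0:ℝ) rinf := fun v hv =>
    ⟨hφpos _ (Real.sqrt_pos.2 hv), (hφ2 _ (Real.sqrt_nonneg v)).1.2⟩
  -- E1 : first derivative of F
  have hE1 : ∀ v : ℝ, 0 < v →
      HasDerivAt F (1/(2 * deriv (deriv f₁) (φ (Real.sqrt v)))) v := by
    intro v hv
    have hmem := hrrmem v hv
    have hsq : 0 < Real.sqrt v := Real.sqrt_pos.2 hv
    have hchain : HasDerivAt (fun w : ℝ => f₁ (φ (Real.sqrt w)))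
        (deriv f₁ (φ (Real.sqrt v)) *
          ((-(deriv (deriv f₁) (φ (Real.sqrt v))))⁻¹ * (1/(2*Real.sqrt v)))) v :=
      (hf₁d _ hmem).comp v (hrrd v hv)
    have hFfun : F = fun w : ℝ => f₁ (φ (Real.sqrt w)) := funext hF
    rw [hFfun]
    have hf2ne : deriv (deriv f₁) (φ (Real.sqrt v)) ≠ 0 :=
      ne_of_lt (hf₁curv _ (Set.Ioo_subset_Ico_self hmem))
    have hval : deriv f₁ (φ (Real.sqrt v)) *
        ((-(deriv (deriv f₁) (φ (Real.sqrt v))))⁻¹ * (1/(2*Real.sqrt v)))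
        = 1/(2 * deriv (deriv f₁) (φ (Real.sqrt v))) := by
      rw [hφval _ (Real.sqrt_nonneg v)]
      field_simp
    rw [← hval]
    exact hchain
  -- E2 : second derivative of F
  have hE2 : ∀ v : ℝ, 0 < v →
      HasDerivAt (deriv F) (deriv (deriv (deriv f₁)) (φ (Real.sqrt v)) /
        (4*Real.sqrt v*(deriv (deriv f₁) (φ (Real.sqrt v)))^3)) v := by
    intro v hv
    have hmem := hrrmem v hv
    have hsq : 0 < Real.sqrt v := Real.sqrt_pos.2 hv
    have hf2ne : deriv (deriv f₁) (φ (Real.sqrt v)) ≠ 0 :=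
      ne_of_lt (hf₁curv _ (Set.Ioo_subset_Ico_self hmem))
    have hev : deriv F =ᶠ[nhds v] fun w : ℝ => (2 * deriv (deriv f₁) (φ (Real.sqrt w)))⁻¹ := by
      filter_upwards [Ioi_mem_nhds hv] with w hw
      rw [(hE1 w hw).deriv, one_div]
    have hcomp : HasDerivAt (fun w : ℝ => deriv (deriv f₁) (φ (Real.sqrt w)))
        (deriv (deriv (deriv f₁)) (φ (Real.sqrt v)) *
          ((-(deriv (deriv f₁) (φ (Real.sqrt v))))⁻¹ * (1/(2*Real.sqrt v)))) v :=
      HasDerivAt.comp (h₂ := deriv (deriv f₁)) v (hf2d _ hmem) (hrrd v hv)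
    have hmul := hcomp.const_mul (2:ℝ)
    have hne : (2:ℝ) * deriv (deriv f₁) (φ (Real.sqrt v)) ≠ 0 := by
      simp [hf2ne]
    have hinv := hmul.inv hne
    have h7 := hinv.congr_of_eventuallyEq hev
    have hval : -(2 * (deriv (deriv (deriv f₁)) (φ (Real.sqrt v)) *
          ((-(deriv (deriv f₁) (φ (Real.sqrt v))))⁻¹ * (1/(2*Real.sqrt v)))))
          / (2 * deriv (deriv f₁) (φ (Real.sqrt v)))^2
        = deriv (deriv (deriv f₁)) (φ (Real.sqrt v)) /
          (4*Real.sqrt v*(deriv (deriv f₁) (φ (Real.sqrt v)))^3) := by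
      field_simp
      ring
    rw [← hval]
    exact h7
  have hAform : ∀ v : ℝ, 0 < v → deriv F v + v * deriv (deriv F) v
      = 1/(2 * deriv (deriv f₁) (φ (Real.sqrt v)))
        + v * (deriv (deriv (deriv f₁)) (φ (Real.sqrt v)) /
          (4*Real.sqrt v*(deriv (deriv f₁) (φ (Real.sqrt v)))^3)) := by
    intro v hv
    rw [(hE1 v hv).deriv, (hE2 v hv).deriv]
  -- G-side
  have hGsm : ContDiffOn ℝ (((⊤:ℕ∞)) : WithTop ℕ∞) (fun v : ℝ => h v 1) (Set.Ioi 0) := by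
    have hmap : Set.MapsTo (fun v : ℝ => (v, (1:ℝ))) (Set.Ioi 0) (Set.Ioi 0 ×ˢ Set.Ioi 0) :=
      fun v hv => Set.mem_prod.2 ⟨hv, Set.mem_Ioi.2 one_pos⟩
    exact (hhsmooth.of_le (by simp)).comp ((contDiff_id.prodMk contDiff_const).contDiffOn) hmap
  have Hhom : ∀ n m : ℝ, 0 < n → 0 < m → h n m = m * (fun v : ℝ => h v 1) (n / m ^ 2) := by
    intro n m hn hm
    have hvec : (WithLp.toLp 2 ![Real.sqrt n, 0, m] : EuclideanSpace ℝ (Fin 3))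
        = m • (WithLp.toLp 2 ![Real.sqrt (n / m ^ 2), 0, 1] : EuclideanSpace ℝ (Fin 3)) := by
      rw [← WithLp.toLp_smul]
      congr 1
      funext i
      fin_cases i
      · show Real.sqrt n = m * (![Real.sqrt (n / m ^ 2), 0, 1] : Fin 3 → ℝ) 0
        show Real.sqrt n = m * Real.sqrt (n / m ^ 2)
        rw [Real.sqrt_div hn.le, Real.sqrt_sq hm.le]
        field_simp
      · show (0:ℝ) = m * (![Real.sqrt (n / m ^ 2), 0, 1] : Fin 3 → ℝ) 1
        show (0:ℝ) = m * 0
        ring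
      · show m = m * (![Real.sqrt (n / m ^ 2), 0, 1] : Fin 3 → ℝ) 2
        show m = m * 1
        ring
    show h n m = m * h (n / m ^ 2) 1
    rw [hh n m, hvec, prop4_g_hom E g hg m hm.le, ← hh (n/m^2) 1]
  obtain ⟨hFrel, hTform⟩ := prop4_Gside (fun v : ℝ => h v 1) F h hGsm Hhom hhm
  have hKA : ∀ v : ℝ, 0 < v →
      prop4_K (fun v : ℝ => h v 1) v = -(deriv F v + v * deriv (deriv F) v) := by
    intro v hv
    have := hFrel v hv
    show deriv (fun v : ℝ => h v 1) v + 5*v*deriv (deriv (fun v : ℝ => h v 1)) v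
      + 2*v^2*deriv (deriv (deriv (fun v : ℝ => h v 1))) v = _
    linarith
  have hKcont : ContinuousOn (prop4_K (fun v : ℝ => h v 1)) (Set.Ioi 0) := by
    have hGc1 := hGsm.deriv_of_isOpen isOpen_Ioi htop
    have hGc2 := hGc1.deriv_of_isOpen isOpen_Ioi htop
    have hGc3 := hGc2.deriv_of_isOpen isOpen_Ioi htop
    show ContinuousOn (fun v : ℝ => deriv (fun v : ℝ => h v 1) v
      + 5*v*deriv (deriv (fun v : ℝ => h v 1)) v
      + 2*v^2*deriv (deriv (deriv (fun v : ℝ => h v 1))) v) (Set.Ioi 0)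
    apply ContinuousOn.add
    apply ContinuousOn.add
    · exact hGc1.continuousOn
    · exact ((continuous_const.mul continuous_id).continuousOn).mul hGc2.continuousOn
    · exact ((continuous_const.mul (continuous_pow 2)).continuousOn).mul hGc3.continuousOn
  -- reduce to bounds on |K| near u j
  suffices hsuf : ∃ U₀ > (0:ℝ), ∃ a > (0:ℝ), ∃ b > (0:ℝ), ∀ v : ℝ, 0 < v → |v - u j| ≤ U₀ →
      a ≤ |prop4_K (fun v : ℝ => h v 1) v| ∧ |prop4_K (fun v : ℝ => h v 1) v| ≤ b by
    obtain ⟨U₀, hU₀, a, ha, b, hb, hKb⟩ := hsuf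
    have hc₂ : 0 < c₂ := lt_of_lt_of_le hc₁ hc₁₂
    refine ⟨U₀, hU₀, 2*a/c₂^3, by positivity, 2*b/c₁^3, by positivity, ?_⟩
    intro n m M hn hm hM hmlo hmhi hucl
    have hv : 0 < n / m ^ 2 := div_pos hn (by positivity)
    obtain ⟨hKlo, hKhi⟩ := hKb _ hv hucl
    have hT := hTform n m hn hm
    have hTK : deriv (deriv (fun y : ℝ => deriv (fun x : ℝ => h x y) n)) m
        = (2/m^3) * prop4_K (fun v : ℝ => h v 1) (n/m^2) := hT
    rw [hTK]
    have h0 : (0:ℝ) < m^3 := by positivity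
    have hm3 : m^3 ≤ (c₂*M)^3 := pow_le_pow_left₀ hm.le hmhi 3
    have hm3' : (c₁*M)^3 ≤ m^3 := pow_le_pow_left₀ (by positivity) hmlo 3
    have habs : |(2/m^3) * prop4_K (fun v : ℝ => h v 1) (n/m^2)|
        = 2*|prop4_K (fun v : ℝ => h v 1) (n/m^2)|/m^3 := by
      rw [abs_mul, abs_of_pos (show (0:ℝ) < 2/m^3 by positivity)]
      ring
    rw [habs]
    constructor
    · calc 2*a/c₂^3/M^3 = 2*a/(c₂*M)^3 := by rw [div_div, mul_pow]
        _ ≤ 2*a/m^3 := by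
            rw [div_le_div_iff₀ (by positivity) h0]
            exact mul_le_mul_of_nonneg_left hm3 (by positivity)
        _ ≤ 2*|prop4_K (fun v : ℝ => h v 1) (n/m^2)|/m^3 := by
            rw [div_le_div_iff₀ h0 h0]
            have h9 : 2*a ≤ 2*|prop4_K (fun v : ℝ => h v 1) (n/m^2)| := by linarith
            exact mul_le_mul_of_nonneg_right h9 h0.le
    · calc 2*|prop4_K (fun v : ℝ => h v 1) (n/m^2)|/m^3
          ≤ 2*b/m^3 := by
            rw [div_le_div_iff₀ h0 h0]
            have h9 : 2*|prop4_K (fun v : ℝ => h v 1) (n/m^2)| ≤ 2*b := by linarith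
            exact mul_le_mul_of_nonneg_right h9 h0.le
        _ ≤ 2*b/(c₁*M)^3 := by
            rw [div_le_div_iff₀ h0 (by positivity)]
            exact mul_le_mul_of_nonneg_left hm3' (by positivity)
        _ = 2*b/c₁^3/M^3 := by rw [div_div, mul_pow]
  
  rcases lt_or_eq_of_le hj with hjlt | hjeq
  · rcases Nat.eq_zero_or_pos j with hj0 | hjpos
    · -- ===================== case j = 0 =====================
      subst hj0
      have hu0 : u 0 = 0 := by rw [hu, hrz0, hf₁pole]; norm_num
      have hν : deriv (deriv f₁) 0 < 0 := hf₁curv 0 h0mem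
      -- derivWithin machinery to control f₁'' near 0
      have hud : UniqueDiffOn ℝ (Set.Ico (0:ℝ) rinf) := uniqueDiffOn_Ico 0 rinf
      have hsmI : ContDiffOn ℝ (((⊤:ℕ∞)) : WithTop ℕ∞) f₁ (Set.Ico 0 rinf) :=
        hf₁smooth.of_le (by simp)
      have hW1sm : ContDiffOn ℝ (((⊤:ℕ∞)) : WithTop ℕ∞)
          (derivWithin f₁ (Set.Ico 0 rinf)) (Set.Ico 0 rinf) := hsmI.derivWithin hud htop
      have hW1cont : ContinuousOn (derivWithin f₁ (Set.Ico 0 rinf)) (Set.Ico 0 rinf) :=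
        hW1sm.continuousOn
      have hW2cont : ContinuousOn
          (derivWithin (derivWithin f₁ (Set.Ico 0 rinf)) (Set.Ico 0 rinf)) (Set.Ico 0 rinf) :=
        (hW1sm.derivWithin hud htop).continuousOn
      have hψ0diff : DifferentiableAt ℝ (deriv f₁) 0 :=
        differentiableAt_of_deriv_ne_zero (ne_of_lt hν)
      have hW1Ioo : ∀ r ∈ Set.Ioo (0:ℝ) rinf,
          derivWithin f₁ (Set.Ico 0 rinf) r = deriv f₁ r := fun r hr =>
        ((hsmO.differentiableOn hone).differentiableAt (isOpen_Ioo.mem_nhds hr)).derivWithin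
          (hud r (Set.Ioo_subset_Ico_self hr))
      have hW10 : derivWithin f₁ (Set.Ico 0 rinf) 0 = deriv f₁ 0 := by
        have hne : (nhdsWithin (0:ℝ) (Set.Ioo 0 rinf)).NeBot := by
          rw [nhdsWithin_Ioo_eq_nhdsGT hrinf]; infer_instance
        have T1 : Tendsto (derivWithin f₁ (Set.Ico 0 rinf)) (nhdsWithin 0 (Set.Ioo 0 rinf))
            (nhds (derivWithin f₁ (Set.Ico 0 rinf) 0)) :=
          (hW1cont 0 h0mem).mono_left (nhdsWithin_mono 0 Set.Ioo_subset_Ico_self)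
        have T2 : Tendsto (deriv f₁) (nhdsWithin 0 (Set.Ioo 0 rinf)) (nhds (deriv f₁ 0)) :=
          (hψ0diff.continuousAt.tendsto).mono_left nhdsWithin_le_nhds
        have T1' : Tendsto (deriv f₁) (nhdsWithin 0 (Set.Ioo 0 rinf))
            (nhds (derivWithin f₁ (Set.Ico 0 rinf) 0)) := by
          apply T1.congr'
          filter_upwards [self_mem_nhdsWithin] with r hr
          exact hW1Ioo r hr
        exact tendsto_nhds_unique T1' T2
      have hW1eq : Set.EqOn (derivWithin f₁ (Set.Ico 0 rinf)) (deriv f₁) (Set.Ico 0 rinf) := by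
        intro r hr
        rcases eq_or_lt_of_le hr.1 with h1 | h1
        · rw [← h1]; exact hW10
        · exact hW1Ioo r ⟨h1, hr.2⟩
      have hW2ψ : ∀ r ∈ Set.Ico (0:ℝ) rinf,
          derivWithin (derivWithin f₁ (Set.Ico 0 rinf)) (Set.Ico 0 rinf) r
            = derivWithin (deriv f₁) (Set.Ico 0 rinf) r := fun r hr =>
        derivWithin_congr hW1eq (hW1eq hr)
      have hW20 : derivWithin (derivWithin f₁ (Set.Ico 0 rinf)) (Set.Ico 0 rinf) 0
          = deriv (deriv f₁) 0 := by
        rw [hW2ψ 0 h0mem]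
        exact hψ0diff.derivWithin (hud 0 h0mem)
      have hW2Ioo : ∀ r ∈ Set.Ioo (0:ℝ) rinf,
          derivWithin (derivWithin f₁ (Set.Ico 0 rinf)) (Set.Ico 0 rinf) r
            = deriv (deriv f₁) r := by
        intro r hr
        rw [hW2ψ r (Set.Ioo_subset_Ico_self hr)]
        exact ((hψO.differentiableOn hone).differentiableAt
          (isOpen_Ioo.mem_nhds hr)).derivWithin (hud r (Set.Ioo_subset_Ico_self hr))
      -- band for f₁'' near 0
      obtain ⟨δ₀, hδ₀pos, hδ₀⟩ := Metric.continuousWithinAt_iff.1 (hW2cont 0 h0mem)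
        (-(deriv (deriv f₁) 0)/2) (by linarith)
      obtain ⟨δ, hδpos, c, hcpos, C, hCpos, hd0b⟩ := hd0
      set β := -(deriv (deriv f₁) 0)/2 with hβdef
      have hβpos : 0 < β := by rw [hβdef]; linarith
      have hε₁pos : 0 < min (δ₀/2) (min (rinf/2) (min (δ/2) 1)) :=
        lt_min (by linarith) (lt_min (by linarith) (lt_min (by linarith) one_pos))
      set ε₁ := min (δ₀/2) (min (rinf/2) (min (δ/2) 1)) with hε₁def
      have hε₁δ₀ : ε₁ ≤ δ₀/2 := min_le_left _ _
      have hε₁rinf2 : ε₁ ≤ rinf/2 := le_trans (min_le_right _ _) (min_le_left _ _)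
      have hε₁δ : ε₁ ≤ δ/2 :=
        le_trans (min_le_right _ _) (le_trans (min_le_right _ _) (min_le_left _ _))
      have hε₁one : ε₁ ≤ 1 :=
        le_trans (min_le_right _ _) (le_trans (min_le_right _ _) (min_le_right _ _))
      have hε₁rinf : ε₁ < rinf := by linarith
      have hf2band : ∀ r : ℝ, 0 < r → r ≤ ε₁ → β ≤ -(deriv (deriv f₁) r)
          ∧ -(deriv (deriv f₁) r) ≤ 3*β := by
        intro r hr0 hrε
        have hrIco : r ∈ Set.Ico (0:ℝ) rinf := ⟨hr0.le, lt_of_le_of_lt hrε hε₁rinf⟩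
        have hdist : dist r (0:ℝ) < δ₀ := by
          rw [Real.dist_eq, sub_zero, abs_of_pos hr0]; linarith
        have h8 := hδ₀ hrIco hdist
        rw [Real.dist_eq, hW20, hW2Ioo r ⟨hr0, hrIco.2⟩] at h8
        have h9 := abs_lt.1 h8
        constructor
        · rw [hβdef]; rw [hβdef] at h9; obtain ⟨h9a, h9b⟩ := h9; linarith
        · rw [hβdef]; rw [hβdef] at h9; obtain ⟨h9a, h9b⟩ := h9; linarith
      have hψε₁neg : deriv f₁ ε₁ < 0 := hψneg ε₁ ⟨hε₁pos, hε₁rinf⟩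
      have hU₀pos : 0 < min ((deriv f₁ ε₁)^2) (β^3/(3*C)) := by
        apply lt_min
        · have h9 : 0 < deriv f₁ ε₁ * deriv f₁ ε₁ := mul_pos_of_neg_of_neg hψε₁neg hψε₁neg
          nlinarith [h9]
        · positivity
      refine ⟨min ((deriv f₁ ε₁)^2) (β^3/(3*C)), hU₀pos, 1/(12*β), by positivity,
        1/(2*β) + 1/(12*β), by positivity, ?_⟩
      intro v hv hvcl
      have hvU : v ≤ min ((deriv f₁ ε₁)^2) (β^3/(3*C)) := by
        rwa [hu0, sub_zero, abs_of_pos hv] at hvcl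
      have hsqv : 0 < Real.sqrt v := Real.sqrt_pos.2 hv
      obtain ⟨r, hrdef⟩ : ∃ r, r = φ (Real.sqrt v) := ⟨_, rfl⟩
      have hrIoo : r ∈ Set.Ioo (0:ℝ) rinf := by rw [hrdef]; exact hrrmem v hv
      have hψr : deriv f₁ r = -(Real.sqrt v) := by
        rw [hrdef]; exact hφval _ (Real.sqrt_nonneg v)
      have hrε₁ : r ≤ ε₁ := by
        have h1 : Real.sqrt v ≤ -(deriv f₁ ε₁) := by
          have h2 : Real.sqrt v ≤ Real.sqrt ((deriv f₁ ε₁)^2) :=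
            Real.sqrt_le_sqrt (le_trans hvU (min_le_left _ _))
          rwa [Real.sqrt_sq_eq_abs, abs_of_neg hψε₁neg] at h2
        have hε₁Ico : ε₁ ∈ Set.Ico (0:ℝ) rinf := ⟨hε₁pos.le, hε₁rinf⟩
        rcases lt_or_eq_of_le h1 with h3 | h3
        · have h4 := hφmono _ _ (Real.sqrt_nonneg v) h3
          rw [hφ ε₁ hε₁Ico] at h4
          rw [hrdef]; exact h4.le
        · rw [hrdef, h3, hφ ε₁ hε₁Ico]
      obtain ⟨hβlo, hβhi⟩ := hf2band r hrIoo.1 hrε₁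
      -- mean value theorem: r ≤ √v / β
      have hMVT : r ≤ Real.sqrt v / β := by
        have hcont : ContinuousOn (deriv f₁) (Set.Icc 0 r) :=
          hψcont.mono (fun x hx => ⟨hx.1, lt_of_le_of_lt hx.2 hrIoo.2⟩)
        have hdiff : DifferentiableOn ℝ (deriv f₁) (Set.Ioo 0 r) := fun x hx =>
          ((hψO.differentiableOn hone).differentiableAt
            (isOpen_Ioo.mem_nhds ⟨hx.1, lt_trans hx.2 hrIoo.2⟩)).differentiableWithinAt
        obtain ⟨ξ, hξ, hslope⟩ := exists_deriv_eq_slope (deriv f₁) hrIoo.1 hcont hdiff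
        rw [hf₁pole, hψr, sub_zero, sub_zero] at hslope
        have hξband := hf2band ξ hξ.1 (le_trans hξ.2.le hrε₁)
        have h5 : β ≤ Real.sqrt v / r := by
          have h6 := hξband.1
          rw [hslope] at h6
          have h7 : -(-Real.sqrt v / r) = Real.sqrt v / r := by ring
          rw [h7] at h6
          exact h6
        rw [le_div_iff₀ hβpos]
        have h8 := (le_div_iff₀ hrIoo.1).1 h5
        linarith
      have hδr : r < δ := by linarith
      have hf3bd : |deriv (deriv (deriv f₁)) r| ≤ C * (Real.sqrt v / β) := by
        have h1 := (hd0b r hrIoo.1 hδr).2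
        rw [hiter3] at h1
        have h2 : r^(2*d 0+1) ≤ r := by
          calc r^(2*d 0+1) ≤ r^1 :=
                pow_le_pow_of_le_one hrIoo.1.le (le_trans hrε₁ hε₁one) (by omega)
            _ = r := pow_one r
        calc |deriv (deriv (deriv f₁)) r| ≤ C * r^(2*d 0+1) := h1
          _ ≤ C * r := mul_le_mul_of_nonneg_left h2 hCpos.le
          _ ≤ C * (Real.sqrt v / β) := mul_le_mul_of_nonneg_left hMVT hCpos.le
      -- assemble
      have hAval := hAform v hv
      rw [← hrdef] at hAval
      have hf2r : deriv (deriv f₁) r < 0 := by linarith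
      have hKv := hKA v hv
      rw [hAval] at hKv
      obtain ⟨t1, ht1def⟩ : ∃ t1, t1 = 1/(2 * deriv (deriv f₁) r) := ⟨_, rfl⟩
      obtain ⟨t2, ht2def⟩ : ∃ t2, t2 = v * (deriv (deriv (deriv f₁)) r /
        (4*Real.sqrt v*(deriv (deriv f₁) r)^3)) := ⟨_, rfl⟩
      rw [← ht1def, ← ht2def] at hKv
      have ht1abs : |t1| = 1/(2*(-(deriv (deriv f₁) r))) := by
        have hne2 : (2:ℝ) * (-(deriv (deriv f₁) r)) = -(2*deriv (deriv f₁) r) := by ring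
        rw [ht1def, abs_of_neg (div_neg_of_pos_of_neg one_pos
          (by linarith : 2*deriv (deriv f₁) r < 0)), hne2, div_neg]
      have ht1lo : 1/(6*β) ≤ |t1| := by
        rw [ht1abs]
        apply one_div_le_one_div_of_le (by linarith) (by linarith)
      have ht1hi : |t1| ≤ 1/(2*β) := by
        rw [ht1abs]
        apply one_div_le_one_div_of_le (by linarith) (by linarith)
      have ht2abs : |t2| = v * |deriv (deriv (deriv f₁)) r| /
          (4*Real.sqrt v*(-(deriv (deriv f₁) r))^3) := by
        rw [ht2def, abs_mul, abs_of_pos hv, abs_div, abs_mul, abs_mul, abs_pow,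
          abs_of_neg hf2r, abs_of_pos hsqv, abs_of_pos (show (0:ℝ) < 4 by norm_num),
          mul_div_assoc]
      have hpow3 : β^3 ≤ (-(deriv (deriv f₁) r))^3 := by
        apply pow_le_pow_left₀ hβpos.le hβlo
      have ht2hi : |t2| ≤ 1/(12*β) := by
        rw [ht2abs]
        calc v * |deriv (deriv (deriv f₁)) r| / (4*Real.sqrt v*(-(deriv (deriv f₁) r))^3)
            ≤ v * (C * (Real.sqrt v/β)) / (4*Real.sqrt v*β^3) := by
              apply div_le_div₀ (by positivity)
                (mul_le_mul_of_nonneg_left hf3bd hv.le) (by positivity)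
              exact mul_le_mul_of_nonneg_left hpow3 (by positivity)
          _ = C * v / (4*β^4) := by
              rw [← Real.sqrt_mul_self hv.le]
              field_simp
          _ ≤ C * (β^3/(3*C)) / (4*β^4) := by
              rw [div_le_div_iff₀ (by positivity) (by positivity)]
              have h9 : C * v ≤ C * (β^3/(3*C)) :=
                mul_le_mul_of_nonneg_left (le_trans hvU (min_le_right _ _)) hCpos.le
              exact mul_le_mul_of_nonneg_right h9 (by positivity)
          _ = 1/(12*β) := by
              field_simp
              ring
      have hKvabs : |prop4_K (fun v : ℝ => h v 1) v| = |t1 + t2| := by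
        rw [hKv, abs_neg]
      have h5 := abs_add_le t1 t2
      have h6 := abs_add_le (t1 + t2) (-t2)
      rw [add_neg_cancel_right, abs_neg] at h6
      have hβne : β ≠ 0 := ne_of_gt hβpos
      have hid : 1/(6*β) = 2*(1/(12*β)) := by field_simp; ring
      constructor
      · rw [hKvabs]; linarith
      · rw [hKvabs]; linarith
    · -- ===================== case 1 ≤ j < j₀ =====================
      have hjIic : j ∈ Set.Iic j₀ := hj
      have hrjpos : 0 < rz j := by
        have h1 := hrzmono (Set.mem_Iic.2 (Nat.zero_le j₀)) hjIic hjpos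
        rwa [hrz0] at h1
      have hmemz : rz j ∈ {r : ℝ | r ∈ Set.Ico 0 rinf ∧ iteratedDeriv 3 f₁ r = 0} := by
        rw [hrzzeros]; exact ⟨j, hjlt, rfl⟩
      have hrjIco : rz j ∈ Set.Ico (0:ℝ) rinf := hmemz.1
      have hrjIoo : rz j ∈ Set.Ioo (0:ℝ) rinf := ⟨hrjpos, hrjIco.2⟩
      have hf3z : deriv (deriv (deriv f₁)) (rz j) = 0 := by
        have := hmemz.2; rwa [hiter3] at this
      have hψrj : deriv f₁ (rz j) < 0 := hψneg _ hrjIoo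
      have hujpos : 0 < u j := by
        rw [hu]
        have h9 : 0 < deriv f₁ (rz j) * deriv f₁ (rz j) := mul_pos_of_neg_of_neg hψrj hψrj
        nlinarith [h9]
      have hsqu : Real.sqrt (u j) = -(deriv f₁ (rz j)) := by
        rw [hu, Real.sqrt_sq_eq_abs, abs_of_neg hψrj]
      have hrru : φ (Real.sqrt (u j)) = rz j := by
        rw [hsqu]; exact hφ _ hrjIco
      have hAval := hAform (u j) hujpos
      rw [hrru, hf3z] at hAval
      simp only [zero_div, mul_zero, add_zero] at hAval
      have hKuj : prop4_K (fun v : ℝ => h v 1) (u j)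
          = -(1/(2 * deriv (deriv f₁) (rz j))) := by
        rw [hKA _ hujpos, hAval]
      have hf2rj : deriv (deriv f₁) (rz j) < 0 := hf₁curv _ hrjIco
      have hKpos : 0 < prop4_K (fun v : ℝ => h v 1) (u j) := by
        rw [hKuj]
        have h9 : 1/(2*deriv (deriv f₁) (rz j)) < 0 :=
          div_neg_of_pos_of_neg one_pos (by linarith)
        linarith
      have hKat : ContinuousAt (prop4_K (fun v : ℝ => h v 1)) (u j) :=
        hKcont.continuousAt (Ioi_mem_nhds hujpos)
      obtain ⟨δ', hδ', hball⟩ := Metric.continuousAt_iff.1 hKat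
        (prop4_K (fun v : ℝ => h v 1) (u j)/2) (by linarith)
      refine ⟨δ'/2, by linarith, prop4_K (fun v : ℝ => h v 1) (u j)/2, by linarith,
        prop4_K (fun v : ℝ => h v 1) (u j) + prop4_K (fun v : ℝ => h v 1) (u j)/2,
        by linarith, ?_⟩
      intro v hv hvcl
      have hdist : dist v (u j) < δ' := by
        rw [Real.dist_eq]; linarith [abs_nonneg (v - u j)]
      have h3 := hball hdist
      rw [Real.dist_eq] at h3
      have h1 := abs_sub_abs_le_abs_sub (prop4_K (fun v : ℝ => h v 1) v)
        (prop4_K (fun v : ℝ => h v 1) (u j))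
      have h2 := abs_sub_abs_le_abs_sub (prop4_K (fun v : ℝ => h v 1) (u j))
        (prop4_K (fun v : ℝ => h v 1) v)
      rw [abs_sub_comm] at h2
      have haKuj : |prop4_K (fun v : ℝ => h v 1) (u j)| = prop4_K (fun v : ℝ => h v 1) (u j) :=
        abs_of_pos hKpos
      constructor
      · linarith
      · linarith
  · -- ===================== case j = j₀ : contradiction =====================
    exfalso
    obtain ⟨δ, hδpos, c, hcpos, C, hCpos, hbd⟩ := hd j₀ hj₀pos le_rfl
    have hdj₀ : 0 < d j₀ := hjeq ▸ hdj
    have hx₀pos : 0 < rz j₀ := by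
      have h1 := hrzmono (Set.mem_Iic.2 (Nat.zero_le j₀)) (Set.mem_Iic.2 le_rfl) hj₀pos
      rwa [hrz0] at h1
    have hx₀lt : rz j₀ < rinf := hrzlast.2
    have hf3c : ContinuousAt (deriv (deriv (deriv f₁))) (rz j₀) :=
      (hf3O.continuousOn).continuousAt (isOpen_Ioo.mem_nhds ⟨hx₀pos, hx₀lt⟩)
    have hlim1 : Tendsto (fun r => |deriv (deriv (deriv f₁)) r|)
        (nhdsWithin (rz j₀) (Set.Ioi (rz j₀))) (nhds |deriv (deriv (deriv f₁)) (rz j₀)|) :=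
      ((hf3c.tendsto).mono_left nhdsWithin_le_nhds).abs
    have hlim2 : Tendsto (fun r : ℝ => C * (r - rz j₀)^(d j₀))
        (nhdsWithin (rz j₀) (Set.Ioi (rz j₀))) (nhds 0) := by
      have hcc : Continuous (fun r : ℝ => C * (r - rz j₀)^(d j₀)) := by continuity
      have h1 := (hcc.tendsto (rz j₀)).mono_left
        (nhdsWithin_le_nhds (s := Set.Ioi (rz j₀)))
      simpa [sub_self, zero_pow (Nat.pos_iff_ne_zero.mp hdj₀), mul_zero] using h1
    have hev : ∀ᶠ r in nhdsWithin (rz j₀) (Set.Ioi (rz j₀)),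
        |deriv (deriv (deriv f₁)) r| ≤ C * (r - rz j₀)^(d j₀) := by
      filter_upwards [Ioo_mem_nhdsGT_of_mem
        (show rz j₀ ∈ Set.Ico (rz j₀) (min (rz j₀ + δ) rinf) from
          ⟨le_rfl, lt_min (by linarith) hx₀lt⟩)] with r hr
      have hrI : r ∈ Set.Ico (0:ℝ) rinf :=
        ⟨by linarith [hr.1], lt_of_lt_of_le hr.2 (min_le_right _ _)⟩
      have hrne : r ≠ rz j₀ := ne_of_gt hr.1
      have hrδ : |r - rz j₀| < δ := by
        rw [abs_of_pos (by linarith [hr.1])]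
        have := lt_of_lt_of_le hr.2 (min_le_left _ _); linarith
      have h1 := (hbd r hrI hrne hrδ).2
      rw [hiter3] at h1
      rwa [abs_of_pos (show 0 < r - rz j₀ by linarith [hr.1])] at h1
    have hle : |deriv (deriv (deriv f₁)) (rz j₀)| ≤ 0 :=
      le_of_tendsto_of_tendsto hlim1 hlim2 hev
    have hf3x₀ : deriv (deriv (deriv f₁)) (rz j₀) = 0 :=
      abs_eq_zero.1 (le_antisymm hle (abs_nonneg _))
    have hmemz : rz j₀ ∈ {r : ℝ | r ∈ Set.Ico 0 rinf ∧ iteratedDeriv 3 f₁ r = 0} :=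
      ⟨⟨hx₀pos.le, hx₀lt⟩, by rw [hiter3]; exact hf3x₀⟩
    rw [hrzzeros] at hmemz
    obtain ⟨i, hi, hieq⟩ := hmemz
    have hilt : i < j₀ := hi
    have h1 : i = j₀ := hrzmono.injOn (Set.mem_Iic.2 hilt.le) (Set.mem_Iic.2 le_rfl) hieq
    exact absurd (h1 ▸ hilt) (lt_irrefl j₀)
end
end

section
/- (Lemma 2) Let (a_m) be a finite sequence of points in [0, 1/2] and A, B ≥ 0 such that #{m : a_m ≤ x} ≤ A + Bx for every 0 ≤ x ≤ 1/2. Then for any H > 0, Σ_m min{H, a_m^{−1}} ≤ AH + B(1 + |log H|). -/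
/-!
Partial summation. For `0 < c ≤ 1/2` and `0 ≤ a ≤ 1/2` one has
`(max c a)⁻¹ = 2 + ∫ x in Ioc c (1/2), 1_{a < x} x⁻²`, so summing over `m` turns the sum into
`2 N + ∫ x in Ioc c (1/2), #{m | a m < x} x⁻²`, and the counting hypothesis bounds the integrand by
`A x⁻² + B x⁻¹`, whose integral is `A (c⁻¹ - 2) + B log (1 / (2 c))`. Take `c = H⁻¹` when `H > 2`;
when `H ≤ 2` every term is at most `H` and `N ≤ A + B / 2`.
-/

open MeasureTheory Finset Set

lemma integral_inv_sq_of_pos {u b : ℝ} (hu : 0 < u) (hub : u ≤ b) :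
    ∫ x in u..b, (x ^ 2)⁻¹ = u⁻¹ - b⁻¹ := by
  have hpos : ∀ x ∈ uIcc u b, 0 < x := fun x hx => hu.trans_le (uIcc_of_le hub ▸ hx).1
  rw [intervalIntegral.integral_eq_sub_of_hasDerivAt (f := -fun x => x⁻¹)
    (fun x hx => by simpa using (hasDerivAt_inv (hpos x hx).ne').neg)]
  · simp only [Pi.neg_apply]
    ring
  · exact (continuousOn_pow 2).inv₀ (fun x hx => (pow_pos (hpos x hx) 2).ne')
      |>.intervalIntegrable

lemma integrableOn_Ioc_inv_sq {c b : ℝ} (hc : 0 < c) :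
    IntegrableOn (fun x : ℝ => (x ^ 2)⁻¹) (Ioc c b) :=
  ((continuousOn_pow 2).inv₀ fun _ hx => (pow_pos (hc.trans_le hx.1) 2).ne').integrableOn_Icc
    |>.mono_set Ioc_subset_Icc_self

lemma integrableOn_Ioc_inv {c b : ℝ} (hc : 0 < c) :
    IntegrableOn (fun x : ℝ => x⁻¹) (Ioc c b) :=
  (continuousOn_id.inv₀ fun _ hx => (hc.trans_le hx.1).ne').integrableOn_Icc
    |>.mono_set Ioc_subset_Icc_self

lemma setIntegral_Ioc_indicator_Ioi_inv_sq {a b c : ℝ} (hc : 0 < c) (hcb : c ≤ b) (hab : a ≤ b) :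
    ∫ x in Ioc c b, (Ioi a).indicator (fun x => (x ^ 2)⁻¹) x = (max c a)⁻¹ - b⁻¹ := by
  rw [setIntegral_indicator measurableSet_Ioi, Ioc_inter_Ioi,
    ← intervalIntegral.integral_of_le (max_le hcb hab)]
  exact integral_inv_sq_of_pos (lt_max_of_lt_left hc) (max_le hcb hab)

lemma ite_min_inv_eq_inv_max {H a : ℝ} (hH : 0 < H) (ha : 0 ≤ a) :
    (if a = 0 then H else min H a⁻¹) = (max H⁻¹ a)⁻¹ := by
  rcases ha.eq_or_lt with rfl | ha
  · simp [hH.le]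
  · rw [if_neg ha.ne']
    rcases le_total H⁻¹ a with h | h
    · rw [max_eq_right h, min_eq_right (inv_le_of_inv_le₀ hH h)]
    · rw [max_eq_left h, inv_inv, min_eq_left ((le_inv_comm₀ ha hH).1 h)]

theorem sum_inv_max_le {ι : Type*} [Fintype ι] (a : ι → ℝ) {A B b c : ℝ}
    (hc : 0 < c) (hcb : c ≤ b) (hab : ∀ i, a i ≤ b)
    (hcount : ∀ x ∈ Ioc c b, (#{i | a i ≤ x} : ℝ) ≤ A + B * x) :
    ∑ i, (max c (a i))⁻¹ ≤ Fintype.card ι * b⁻¹ + A * (c⁻¹ - b⁻¹) + B * Real.log (b / c) := by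
  have hf := integrableOn_Ioc_inv_sq hc (b := b)
  have hg : IntegrableOn (fun x => A * (x ^ 2)⁻¹ + B * x⁻¹) (Ioc c b) :=
    (hf.const_mul A).add ((integrableOn_Ioc_inv hc).const_mul B)
  have hpointwise : ∀ x ∈ Ioc c b,
      ∑ i, (Ioi (a i)).indicator (fun x => (x ^ 2)⁻¹) x ≤ A * (x ^ 2)⁻¹ + B * x⁻¹ := by
    intro x hx
    rw [sum_indicator_eq_sum_filter, sum_const, nsmul_eq_mul]
    have hcard : #{i | x ∈ Ioi (a i)} ≤ #{i | a i ≤ x} :=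
      Finset.card_le_card <| Finset.monotone_filter_right _ fun _ _ h => (Set.mem_Ioi.1 h).le
    calc (#{i | x ∈ Ioi (a i)} : ℝ) * (x ^ 2)⁻¹ ≤ (A + B * x) * (x ^ 2)⁻¹ := by
          gcongr
          exact le_trans (by exact_mod_cast hcard) (hcount x hx)
      _ = A * (x ^ 2)⁻¹ + B * x⁻¹ := by field_simp
  calc ∑ i, (max c (a i))⁻¹
      = ∑ i, (b⁻¹ + ∫ x in Ioc c b, (Ioi (a i)).indicator (fun x => (x ^ 2)⁻¹) x) := by
        congr! 1 with i
        rw [setIntegral_Ioc_indicator_Ioi_inv_sq hc hcb (hab i)]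
        ring
    _ = Fintype.card ι * b⁻¹ +
          ∫ x in Ioc c b, ∑ i, (Ioi (a i)).indicator (fun x => (x ^ 2)⁻¹) x := by
        rw [integral_finsetSum _ fun i _ => hf.indicator measurableSet_Ioi, sum_add_distrib,
          sum_const, card_univ, nsmul_eq_mul]
    _ ≤ Fintype.card ι * b⁻¹ + ∫ x in Ioc c b, (A * (x ^ 2)⁻¹ + B * x⁻¹) :=
        add_le_add_right (setIntegral_mono_on
          (integrable_finsetSum _ fun i _ => hf.indicator measurableSet_Ioi) hg measurableSet_Ioc
          hpointwise) _
    _ = _ := by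
        rw [integral_add (hf.const_mul A) ((integrableOn_Ioc_inv hc).const_mul B),
          integral_const_mul, integral_const_mul, ← intervalIntegral.integral_of_le hcb,
          ← intervalIntegral.integral_of_le hcb, integral_inv_sq_of_pos hc hcb,
          integral_inv_of_pos hc (hc.trans_le hcb), add_assoc]

theorem lemma_two_general
    (N : ℕ) (a : Fin N → ℝ) (A B : ℝ) (hB : 0 ≤ B)
    (ha : ∀ m, a m ∈ Set.Icc (0:ℝ) (1/2))
    (hcount : ∀ x : ℝ, 0 ≤ x → x ≤ 1/2 →
      ((Finset.univ.filter fun m => a m ≤ x).card : ℝ) ≤ A + B * x)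
    (H : ℝ) (hH : 0 < H) :
    ∑ m, (if a m = 0 then H else min H (a m)⁻¹) ≤ A * H + B * (1 + |Real.log H|) := by
  rw [sum_congr rfl fun m _ => ite_min_inv_eq_inv_max hH (ha m).1]
  have hN : (N : ℝ) ≤ A + B / 2 := by
    have h := hcount (1 / 2) (by norm_num) le_rfl
    rwa [filter_true_of_mem fun m _ => (ha m).2, card_univ, Fintype.card_fin, mul_one_div] at h
  have hlog := le_abs_self (Real.log H)
  rcases le_or_gt H 2 with hH2 | hH2
  · calc ∑ m, (max H⁻¹ (a m))⁻¹ ≤ ∑ _m : Fin N, H :=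
          sum_le_sum fun m _ => inv_le_of_inv_le₀ hH (le_max_left _ _)
      _ = N * H := by simp
      _ ≤ (A + B / 2) * H := by gcongr
      _ ≤ _ := by nlinarith [abs_nonneg (Real.log H)]
  · have hsum := sum_inv_max_le a (inv_pos.2 hH)
      (inv_le_of_inv_le₀ (by norm_num) (by norm_num; linarith)) (fun m => (ha m).2)
      (fun x hx => hcount x (inv_pos.2 hH |>.trans hx.1).le hx.2)
    rw [inv_inv, Fintype.card_fin, show (1 / 2 : ℝ) / H⁻¹ = H / 2 by field_simp,
      Real.log_div hH.ne' two_ne_zero] at hsum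
    nlinarith [Real.log_nonneg one_le_two]

/-- **Lemma 2.** -/
theorem lemma_two
    (N : ℕ) (a : Fin N → ℝ) (A B : ℝ) (hA : 0 ≤ A) (hB : 0 ≤ B)
    (ha : ∀ m, a m ∈ Set.Icc (0:ℝ) (1/2))
    (hcount : ∀ x : ℝ, 0 ≤ x → x ≤ 1/2 →
      ((Finset.univ.filter fun m => a m ≤ x).card : ℝ) ≤ A + B * x)
    (H : ℝ) (hH : 0 < H) :
    ∑ m, (if a m = 0 then H else min H (a m)⁻¹) ≤ A * H + B * (1 + |Real.log H|) :=
  lemma_two_general N a A B hB ha hcount H hH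
end

section
/- Let 0 ≤ a₁ ≤ a₂ ≤ ⋯ ≤ a_N ≤ 1/2 with m ≤ A + B·a_m for every 1 ≤ m ≤ N (where A, B ≥ 0), and let f : [0, 1/2] → ℝ be non-increasing and nonnegative. Then Σ_{m=1}^{N} f(a_m) ≤ A·f(0) + B·∫₀^{1/2} f(x) dx. -/
/-!
Put `a₀ = 0` and `sₙ = A + B aₙ - n ≥ 0`. Since `f` is non-increasing, passing from `aₙ` to `aₙ₊₁`
costs `(sₙ + B (aₙ₊₁ - aₙ)) f(aₙ₊₁) ≤ sₙ f(aₙ) + B ∫_{aₙ}^{aₙ₊₁} f`, and the left side is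
`f(aₙ₊₁) + sₙ₊₁ f(aₙ₊₁)`. Hence `∑_{m ≤ n} f(aₘ) + sₙ f(aₙ) ≤ A f(0) + B ∫_0^{aₙ} f` by induction,
and one more such step from `a_N` to `1/2`, whose left side is nonnegative, gives the claim.
-/

open MeasureTheory Set

section Antitone

variable {f : ℝ → ℝ} {u t : ℝ}

theorem AntitoneOn.intervalIntegrable_of_mem {lo hi : ℝ} (hf : AntitoneOn f (Icc lo hi))
    (hu : u ∈ Icc lo hi) (ht : t ∈ Icc lo hi) : IntervalIntegrable f volume u t :=
  (hf.mono (uIcc_subset_Icc hu ht)).intervalIntegrable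

theorem AntitoneOn.sub_mul_le_integral (hf : AntitoneOn f (Icc u t)) (hut : u ≤ t) :
    (t - u) * f t ≤ ∫ x in u..t, f x := by
  have hle : ∫ _ in u..t, f t ≤ ∫ x in u..t, f x :=
    intervalIntegral.integral_mono_on hut intervalIntegrable_const
      (hf.intervalIntegrable_of_mem (left_mem_Icc.2 hut) (right_mem_Icc.2 hut))
      fun x hx => hf hx (right_mem_Icc.2 hut) hx.2
  simpa only [intervalIntegral.integral_const, smul_eq_mul] using hle

theorem AntitoneOn.add_mul_sub_mul_le_add_mul_integral {s B : ℝ} (hf : AntitoneOn f (Icc u t))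
    (hut : u ≤ t) (hs : 0 ≤ s) (hB : 0 ≤ B) :
    (s + B * (t - u)) * f t ≤ s * f u + B * ∫ x in u..t, f x := by
  have hft : f t ≤ f u := hf (left_mem_Icc.2 hut) (right_mem_Icc.2 hut) hut
  linarith [mul_le_mul_of_nonneg_left hft hs,
    mul_le_mul_of_nonneg_left (hf.sub_mul_le_integral hut) hB]

end Antitone

section Counting

variable {f : ℝ → ℝ} {c A B : ℝ} {b : ℕ → ℝ} {N : ℕ}

theorem sum_add_slack_mul_le (hf : AntitoneOn f (Icc 0 c)) (hB : 0 ≤ B) (hb0 : b 0 = 0)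
    (hb : ∀ n ≤ N, b n ∈ Icc 0 c) (hbmono : ∀ n < N, b n ≤ b (n + 1))
    (hslack : ∀ n ≤ N, (n : ℝ) ≤ A + B * b n) {n : ℕ} (hn : n ≤ N) :
    ∑ m ∈ Finset.Icc 1 n, f (b m) + (A + B * b n - n) * f (b n)
      ≤ A * f 0 + B * ∫ x in 0..b n, f x := by
  induction n with
  | zero => simp [hb0]
  | succ n ih =>
    have hnN : n < N := hn
    have hbn := hb n hnN.le
    have hbn1 := hb (n + 1) hn
    have hstep := (hf.mono (Icc_subset_Icc hbn.1 hbn1.2)).add_mul_sub_mul_le_add_mul_integral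
      (hbmono n hnN) (sub_nonneg.2 (hslack n hnN.le)) hB
    have hsplit : ∫ x in 0..b (n + 1), f x = (∫ x in 0..b n, f x) + ∫ x in b n..b (n + 1), f x :=
      (intervalIntegral.integral_add_adjacent_intervals
        (hf.intervalIntegrable_of_mem ⟨le_rfl, hbn.1.trans hbn.2⟩ hbn)
        (hf.intervalIntegrable_of_mem hbn hbn1)).symm
    rw [Finset.sum_Icc_succ_top (Nat.le_add_left 1 n), hsplit]
    push_cast
    linarith [ih hnN.le]

theorem sum_le_of_le_add_mul (hf : AntitoneOn f (Icc 0 c)) (hfc : 0 ≤ f c) (hB : 0 ≤ B)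
    (hb0 : b 0 = 0) (hb : ∀ n ≤ N, b n ∈ Icc 0 c) (hbmono : ∀ n < N, b n ≤ b (n + 1))
    (hslack : ∀ n ≤ N, (n : ℝ) ≤ A + B * b n) :
    ∑ m ∈ Finset.Icc 1 N, f (b m) ≤ A * f 0 + B * ∫ x in 0..c, f x := by
  have hbN := hb N le_rfl
  have hc0 : (0 : ℝ) ∈ Icc 0 c := ⟨le_rfl, hbN.1.trans hbN.2⟩
  have hcc : c ∈ Icc 0 c := ⟨hbN.1.trans hbN.2, le_rfl⟩
  have hinv := sum_add_slack_mul_le hf hB hb0 hb hbmono hslack le_rfl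
  have hlast := (hf.mono (Icc_subset_Icc hbN.1 le_rfl)).add_mul_sub_mul_le_add_mul_integral
    hbN.2 (sub_nonneg.2 (hslack N le_rfl)) hB
  have hsplit : ∫ x in 0..c, f x = (∫ x in 0..b N, f x) + ∫ x in b N..c, f x :=
    (intervalIntegral.integral_add_adjacent_intervals
      (hf.intervalIntegrable_of_mem hc0 hbN) (hf.intervalIntegrable_of_mem hbN hcc)).symm
  have hcoef : 0 ≤ A + B * b N - N + B * (c - b N) :=
    add_nonneg (sub_nonneg.2 (hslack N le_rfl)) (mul_nonneg hB (sub_nonneg.2 hbN.2))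
  rw [hsplit]
  linarith [mul_nonneg hcoef hfc]

end Counting

theorem monotone_counting_inequality_general
    (N : ℕ) (a : ℕ → ℝ) (A B : ℝ) (hA : 0 ≤ A) (hB : 0 ≤ B)
    (ha : ∀ m, 1 ≤ m → m ≤ N → a m ∈ Set.Icc (0:ℝ) (1/2))
    (hmono : ∀ m₁ m₂, 1 ≤ m₁ → m₁ ≤ m₂ → m₂ ≤ N → a m₁ ≤ a m₂)
    (hspace : ∀ m, 1 ≤ m → m ≤ N → (m : ℝ) ≤ A + B * a m)
    (f : ℝ → ℝ)
    (hfnonneg : ∀ x ∈ Set.Icc (0:ℝ) (1/2), 0 ≤ f x)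
    (hfmono : AntitoneOn f (Set.Icc (0:ℝ) (1/2))) :
    ∑ m ∈ Finset.Icc 1 N, f (a m) ≤ A * f 0 + B * ∫ x in (0:ℝ)..(1/2), f x := by
  set b := Function.update a 0 0
  have hb_pos {m : ℕ} (hm : 1 ≤ m) : b m = a m := Function.update_of_ne (by omega) _ _
  have hsum : ∑ m ∈ Finset.Icc 1 N, f (a m) = ∑ m ∈ Finset.Icc 1 N, f (b m) :=
    Finset.sum_congr rfl fun m hm => by rw [hb_pos (Finset.mem_Icc.1 hm).1]
  rw [hsum]
  refine sum_le_of_le_add_mul hfmono (hfnonneg _ ⟨by norm_num, le_rfl⟩) hB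
    (Function.update_self _ _ _) (fun n hn => ?_) (fun n hn => ?_) (fun n hn => ?_)
  · rcases Nat.eq_zero_or_pos n with rfl | hn0
    · simp [b]
    · rw [hb_pos hn0]; exact ha n hn0 hn
  · rw [hb_pos (Nat.le_add_left 1 n)]
    rcases Nat.eq_zero_or_pos n with rfl | hn0
    · simpa [b] using (ha 1 le_rfl hn).1
    · rw [hb_pos hn0]; exact hmono n (n + 1) hn0 n.le_succ hn
  · rcases Nat.eq_zero_or_pos n with rfl | hn0
    · simpa [b] using hA
    · rw [hb_pos hn0]; exact hspace n hn0 hn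

/-- The key inequality in the proof of Lemma 2. -/
theorem monotone_counting_inequality
    (N : ℕ) (hN : 0 < N) (a : ℕ → ℝ) (A B : ℝ) (hA : 0 ≤ A) (hB : 0 ≤ B)
    (ha : ∀ m, 1 ≤ m → m ≤ N → a m ∈ Set.Icc (0:ℝ) (1/2))
    (hmono : ∀ m₁ m₂, 1 ≤ m₁ → m₁ ≤ m₂ → m₂ ≤ N → a m₁ ≤ a m₂)
    (hspace : ∀ m, 1 ≤ m → m ≤ N → (m : ℝ) ≤ A + B * a m)
    (f : ℝ → ℝ)
    (hfnonneg : ∀ x ∈ Set.Icc (0:ℝ) (1/2), 0 ≤ f x)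
    (hfmono : AntitoneOn f (Set.Icc (0:ℝ) (1/2)))
    (hfint : IntervalIntegrable f volume 0 (1/2)) :
    ∑ m ∈ Finset.Icc 1 N, f (a m) ≤ A * f 0 + B * ∫ x in (0:ℝ)..(1/2), f x :=
  monotone_counting_inequality_general N a A B hA hB ha hmono hspace f hfnonneg hfmono
end
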